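/- Let A be a unital alternative algebra over a field F, and let R₁ and R₂ be two-sided ideals of A such that for each i = 1, 2 the algebra A is the internal direct sum of Rᵢ and F·1 (i.e. Rᵢ ∩ F·1 = 0 and Rᵢ + F·1 = A). Then the circle loops of R₁ and R₂ are isomorphic: there is a bijection ψ from the set of quasiregular elements of R₁ onto the set of quasiregular elements of R₂ such that ψ(x ∘ y) = ψ(x) ∘ ψ(y) for all quasiregular x, y ∈ R₁. -/

import Mathlib

/-- The circle operation `x ∘ y = x + y - x * y`. -/
def circ {A : Type*} [NonAssocRing A] (x y : A) : A := x + y - x * y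

/-- `a` is quasiregular: there is `b` with `a + b - ab = 0` and `a + b - ba = 0`. -/
def IsQuasireg {A : Type*} [NonAssocRing A] (a : A) : Prop :=
  ∃ b, a + b - a * b = 0 ∧ a + b - b * a = 0

/-- A subset of a ring is a two-sided ideal if it is an additive subgroup absorbing
multiplication on both sides. -/
def IsTwoSidedIdealSet {A : Type*} [NonAssocRing A] (R : Set A) : Prop :=
  (0 : A) ∈ R ∧ (∀ x ∈ R, ∀ y ∈ R, x + y ∈ R) ∧ (∀ x ∈ R, -x ∈ R) ∧
    ∀ a : A, ∀ r ∈ R, a * r ∈ R ∧ r * a ∈ R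

/-- The circle loop `U*(R)` of an ideal `R`: the quasiregular elements of `R`. -/
def circleLoop {A : Type*} [NonAssocRing A] (R : Set A) : Set A :=
  {x : A | x ∈ R ∧ IsQuasireg x}

/-!
`x ↦ 1 - x` turns the circle operation into multiplication, so `U*(R)` becomes the loop of
two-sided invertible elements `u` of `A` whose scalar part modulo `R` is `1`. The decomposition
`A = R ⊕ F·1` makes the scalar part an augmentation `π_R : A → F`, a multiplicative
`F`-linear map with kernel `R`. Rescaling an invertible `u` by `π_{R₂}(u)⁻¹` therefore
moves it from `1 + R₁` to `1 + R₂` multiplicatively, and rescaling by `π_{R₁}` undoes it.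
-/

section CircleOperation

variable {A : Type*} [NonAssocRing A]

theorem one_sub_mul_one_sub (a b : A) : (1 - a) * (1 - b) = 1 - circ a b := by
  simp only [circ, mul_sub, sub_mul, one_mul, mul_one]
  abel

theorem one_sub_mul_one_sub_eq_one_iff (a b : A) :
    (1 - a) * (1 - b) = 1 ↔ a + b - a * b = 0 := by
  rw [one_sub_mul_one_sub, sub_eq_self, circ]

theorem isQuasireg_iff (a : A) :
    IsQuasireg a ↔ ∃ v, (1 - a) * v = 1 ∧ v * (1 - a) = 1 := by
  constructor
  · rintro ⟨b, hab, hba⟩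
    refine ⟨1 - b, (one_sub_mul_one_sub_eq_one_iff a b).2 hab, ?_⟩
    rw [one_sub_mul_one_sub_eq_one_iff, add_comm]
    exact hba
  · rintro ⟨v, hav, hva⟩
    refine ⟨1 - v, ?_, ?_⟩
    · rw [← one_sub_mul_one_sub_eq_one_iff, sub_sub_cancel, hav]
    · rw [add_comm, ← one_sub_mul_one_sub_eq_one_iff, sub_sub_cancel, hva]

end CircleOperation

namespace IsTwoSidedIdealSet

variable {A : Type*} [NonAssocRing A] {R : Set A}

theorem zero_mem (hR : IsTwoSidedIdealSet R) : (0 : A) ∈ R :=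
  hR.1

theorem add_mem (hR : IsTwoSidedIdealSet R) {x y : A} (hx : x ∈ R) (hy : y ∈ R) :
    x + y ∈ R :=
  hR.2.1 x hx y hy

theorem neg_mem (hR : IsTwoSidedIdealSet R) {x : A} (hx : x ∈ R) : -x ∈ R :=
  hR.2.2.1 x hx

theorem mul_mem_left (hR : IsTwoSidedIdealSet R) (a : A) {x : A} (hx : x ∈ R) : a * x ∈ R :=
  (hR.2.2.2 a x hx).1

theorem sub_mem (hR : IsTwoSidedIdealSet R) {x y : A} (hx : x ∈ R) (hy : y ∈ R) :
    x - y ∈ R := by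
  rw [sub_eq_add_neg]
  exact hR.add_mem hx (hR.neg_mem hy)

theorem smul_mem {F : Type*} [Field F] [Module F A] [IsScalarTower F A A]
    (hR : IsTwoSidedIdealSet R) (c : F) {x : A} (hx : x ∈ R) : c • x ∈ R := by
  simpa only [smul_mul_assoc, one_mul] using hR.mul_mem_left (c • 1) hx

end IsTwoSidedIdealSet

section Augmentation

variable {F A : Type*} [Field F] [NonAssocRing A] [Module F A]

def IsAugmentation (R : Set A) (π : A → F) : Prop :=
  ∀ (a : A) (α : F), a - α • (1 : A) ∈ R ↔ π a = α

theorem exists_isAugmentation (h1 : (1 : A) ≠ 0) {R : Set A} (hR : IsTwoSidedIdealSet R)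
    (hdisj : R ∩ Set.range (fun α : F => α • (1 : A)) = {0})
    (hsum : ∀ a : A, ∃ r ∈ R, ∃ α : F, a = r + α • (1 : A)) :
    ∃ π : A → F, IsAugmentation R π := by
  have hscalar : ∀ a : A, ∃ α : F, a - α • (1 : A) ∈ R := fun a => by
    obtain ⟨r, hr, α, rfl⟩ := hsum a
    exact ⟨α, by rwa [add_sub_cancel_right]⟩
  choose π hπ using hscalar
  refine ⟨π, fun a α => ⟨fun ha => ?_, fun h => h ▸ hπ a⟩⟩
  have hmem : (π a - α) • (1 : A) ∈ R ∩ Set.range (fun α : F => α • (1 : A)) := by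
    refine ⟨?_, _, rfl⟩
    convert hR.sub_mem ha (hπ a) using 1
    rw [sub_smul]
    abel
  rw [hdisj, Set.mem_singleton_iff, smul_eq_zero] at hmem
  exact sub_eq_zero.1 (hmem.resolve_right h1)

def normalizeBy (π : A → F) (x : A) : A :=
  1 - (π (1 - x))⁻¹ • (1 - x)

theorem one_sub_normalizeBy (π : A → F) (x : A) :
    1 - normalizeBy π x = (π (1 - x))⁻¹ • (1 - x) :=
  sub_sub_cancel _ _

namespace IsAugmentation

variable {R : Set A} {π : A → F}

theorem sub_smul_one_mem (hπ : IsAugmentation R π) (a : A) : a - π a • (1 : A) ∈ R :=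
  (hπ a (π a)).2 rfl

theorem map_one (hπ : IsAugmentation R π) (hR : IsTwoSidedIdealSet R) : π 1 = 1 :=
  (hπ 1 1).1 (by simpa only [one_smul, sub_self] using hR.zero_mem)

theorem map_one_sub (hπ : IsAugmentation R π) (hR : IsTwoSidedIdealSet R) {x : A}
    (hx : x ∈ R) : π (1 - x) = 1 :=
  (hπ _ _).1 (by simpa only [one_smul, sub_sub_cancel_left] using hR.neg_mem hx)

variable [IsScalarTower F A A]

theorem map_smul (hπ : IsAugmentation R π) (hR : IsTwoSidedIdealSet R) (c : F) (a : A) :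
    π (c • a) = c * π a := by
  refine (hπ _ _).1 ?_
  rw [mul_smul, ← smul_sub]
  exact hR.smul_mem c (hπ.sub_smul_one_mem a)

theorem normalizeBy_normalizeBy (hπ : IsAugmentation R π) (hR : IsTwoSidedIdealSet R)
    (σ : A → F) {x : A} (hx : x ∈ R) (hσ : σ (1 - x) ≠ 0) :
    normalizeBy π (normalizeBy σ x) = x := by
  rw [normalizeBy, one_sub_normalizeBy, hπ.map_smul hR, hπ.map_one_sub hR hx, mul_one, inv_inv,
    smul_smul, mul_inv_cancel₀ hσ, one_smul, sub_sub_cancel]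

variable [SMulCommClass F A A]

theorem map_mul (hπ : IsAugmentation R π) (hR : IsTwoSidedIdealSet R) (a b : A) :
    π (a * b) = π a * π b := by
  refine (hπ _ _).1 ?_
  set r := a - π a • (1 : A)
  set s := b - π b • (1 : A)
  have hexpand : a * b - (π a * π b) • (1 : A) = r * s + π b • r + π a • s := by
    simp only [r, s, sub_mul, mul_sub, smul_sub, smul_mul_assoc, mul_smul_comm, smul_smul,
      one_mul, mul_one, mul_comm (π b)]
    abel
  have hr : r ∈ R := hπ.sub_smul_one_mem a
  have hs : s ∈ R := hπ.sub_smul_one_mem b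
  rw [hexpand]
  exact hR.add_mem (hR.add_mem (hR.mul_mem_left r hs) (hR.smul_mem _ hr)) (hR.smul_mem _ hs)

theorem map_one_sub_ne_zero (hπ : IsAugmentation R π) (hR : IsTwoSidedIdealSet R) {x : A}
    (hx : IsQuasireg x) : π (1 - x) ≠ 0 := by
  obtain ⟨v, hv, -⟩ := (isQuasireg_iff x).1 hx
  refine left_ne_zero_of_mul_eq_one (b := π v) ?_
  rw [← hπ.map_mul hR, hv, hπ.map_one hR]

theorem normalizeBy_mem_circleLoop (hπ : IsAugmentation R π) (hR : IsTwoSidedIdealSet R)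
    {x : A} (hx : IsQuasireg x) : normalizeBy π x ∈ circleLoop R := by
  obtain ⟨v, hxv, hvx⟩ := (isQuasireg_iff x).1 hx
  have hα : π (1 - x) ≠ 0 := hπ.map_one_sub_ne_zero hR hx
  refine ⟨?_, (isQuasireg_iff _).2 ⟨π (1 - x) • v, ?_, ?_⟩⟩
  · have hneg : normalizeBy π x = -((π (1 - x))⁻¹ • (1 - x - π (1 - x) • (1 : A))) := by
      rw [normalizeBy, smul_sub _ (1 - x) (π (1 - x) • 1), smul_smul, inv_mul_cancel₀ hα,
        one_smul]
      abel
    rw [hneg]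
    exact hR.neg_mem (hR.smul_mem _ (hπ.sub_smul_one_mem _))
  · rw [one_sub_normalizeBy, smul_mul_smul_comm, inv_mul_cancel₀ hα, hxv, one_smul]
  · rw [one_sub_normalizeBy, smul_mul_smul_comm, mul_inv_cancel₀ hα, hvx, one_smul]

theorem normalizeBy_circ (hπ : IsAugmentation R π) (hR : IsTwoSidedIdealSet R) (x y : A) :
    normalizeBy π (circ x y) = circ (normalizeBy π x) (normalizeBy π y) := by
  rw [eq_comm, ← sub_right_inj (a := (1 : A)), ← one_sub_mul_one_sub, one_sub_normalizeBy,
    one_sub_normalizeBy, one_sub_normalizeBy, ← one_sub_mul_one_sub, hπ.map_mul hR,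
    smul_mul_smul_comm, mul_inv]

end IsAugmentation

end Augmentation

theorem circleLoop_iso_general (F A : Type*) [Field F] [NonAssocRing A]
    [Module F A] [SMulCommClass F A A] [IsScalarTower F A A] (h1 : (1 : A) ≠ 0)
    (R₁ R₂ : Set A) (hR₁ : IsTwoSidedIdealSet R₁) (hR₂ : IsTwoSidedIdealSet R₂)
    (hdisj₁ : R₁ ∩ Set.range (fun α : F => α • (1 : A)) = {0})
    (hsum₁ : ∀ a : A, ∃ r ∈ R₁, ∃ α : F, a = r + α • (1 : A))
    (hdisj₂ : R₂ ∩ Set.range (fun α : F => α • (1 : A)) = {0})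
    (hsum₂ : ∀ a : A, ∃ r ∈ R₂, ∃ α : F, a = r + α • (1 : A)) :
    ∃ ψ : A → A, Set.BijOn ψ (circleLoop R₁) (circleLoop R₂) ∧
      ∀ x ∈ circleLoop R₁, ∀ y ∈ circleLoop R₁, ψ (circ x y) = circ (ψ x) (ψ y) := by
  obtain ⟨π₁, hπ₁⟩ := exists_isAugmentation h1 hR₁ hdisj₁ hsum₁
  obtain ⟨π₂, hπ₂⟩ := exists_isAugmentation h1 hR₂ hdisj₂ hsum₂
  have hinv : Set.InvOn (normalizeBy π₁) (normalizeBy π₂) (circleLoop R₁) (circleLoop R₂) :=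
    ⟨fun x hx => hπ₁.normalizeBy_normalizeBy hR₁ π₂ hx.1 (hπ₂.map_one_sub_ne_zero hR₂ hx.2),
      fun y hy => hπ₂.normalizeBy_normalizeBy hR₂ π₁ hy.1 (hπ₁.map_one_sub_ne_zero hR₁ hy.2)⟩
  have hmaps₁₂ : Set.MapsTo (normalizeBy π₂) (circleLoop R₁) (circleLoop R₂) :=
    fun x hx => hπ₂.normalizeBy_mem_circleLoop hR₂ hx.2
  have hmaps₂₁ : Set.MapsTo (normalizeBy π₁) (circleLoop R₂) (circleLoop R₁) :=
    fun y hy => hπ₁.normalizeBy_mem_circleLoop hR₁ hy.2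
  exact ⟨normalizeBy π₂, hinv.bijOn hmaps₁₂ hmaps₂₁, fun x _ y _ => hπ₂.normalizeBy_circ hR₂ x y⟩

/-- **Corollary 1.9.**  Let `A` be a unital alternative algebra over a
field `F` and `R₁, R₂` two-sided ideals with `A = Rᵢ ⊕ F·1` for `i = 1, 2`.  Then the
circle loops of `R₁` and `R₂` are isomorphic: there is a bijection `ψ` from the
quasiregular elements of `R₁` onto those of `R₂` with `ψ (x ∘ y) = ψ x ∘ ψ y`. -/
theorem circleLoop_iso (F A : Type*) [Field F] [NonAssocRing A]
    [Module F A] [SMulCommClass F A A] [IsScalarTower F A A] (h1 : (1 : A) ≠ 0)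
    (altl : ∀ x y : A, x * (x * y) = (x * x) * y)
    (altr : ∀ x y : A, (y * x) * x = y * (x * x))
    (R₁ R₂ : Set A) (hR₁ : IsTwoSidedIdealSet R₁) (hR₂ : IsTwoSidedIdealSet R₂)
    (hdisj₁ : R₁ ∩ Set.range (fun α : F => α • (1 : A)) = {0})
    (hsum₁ : ∀ a : A, ∃ r ∈ R₁, ∃ α : F, a = r + α • (1 : A))
    (hdisj₂ : R₂ ∩ Set.range (fun α : F => α • (1 : A)) = {0})
    (hsum₂ : ∀ a : A, ∃ r ∈ R₂, ∃ α : F, a = r + α • (1 : A)) :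
    ∃ ψ : A → A, Set.BijOn ψ (circleLoop R₁) (circleLoop R₂) ∧
      ∀ x ∈ circleLoop R₁, ∀ y ∈ circleLoop R₁, ψ (circ x y) = circ (ψ x) (ψ y) :=
  circleLoop_iso_general F A h1 R₁ R₂ hR₁ hR₂ hdisj₁ hsum₁ hdisj₂ hsum₂
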